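/- Suppose r_0 > 2 attains the minimum of F_v(2_r, p; r+p−1) − r over r ≥ 2 and is the smallest such value, and G is an extremal graph in H(2_{r_0}, p; r_0 + p − 1). Then G →v (2, r_0 + p − 2), i.e. for every partition V(G) = V_1 ∪ V_2 with V_1 independent, V_2 contains an (r_0 + p − 2)-clique. -/

import Mathlib

/-!
Suppose `V = V₁ ∪ V₂` with `V₁` independent and `V₂` free of `(r₀ + p - 2)`-cliques; if `V₁` is
empty, put one vertex into it. Colouring `V₁` with an extra colour of weight `2` shows that
`G - V₁` still arrows `(2_{r₀-1}, p)`, and it is `(r₀ + p - 2)`-clique free. As it has fewer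
vertices than `G`, `F_v(2_{r₀-1}, p; r₀ + p - 2) - (r₀ - 1) ≤ F_v(2_{r₀}, p; r₀ + p - 1) - r₀`,
against the choice of `r₀` as the least minimiser.
-/

open SimpleGraph

/-- `VArrows G a` : for every coloring of the vertices of `G` with `a.length` colors,
some color class `i` contains a clique of size `a.get i`. -/
def VArrows {V : Type} [Fintype V] (G : SimpleGraph V) (a : List ℕ) : Prop :=
  ∀ c : V → Fin a.length, ∃ i : Fin a.length, ∃ S : Finset V,
    (∀ v ∈ S, c v = i) ∧ G.IsNClique (a.get i) S

/-- The vertex Folkman number `F_v(a; q)`. -/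
noncomputable def Fv (a : List ℕ) (q : ℕ) : ℕ :=
  sInf {n : ℕ | ∃ G : SimpleGraph (Fin n), VArrows G a ∧ G.CliqueFree q}

namespace VArrows

variable {V W : Type} [Fintype V] [Fintype W] {G : SimpleGraph V} {a : List ℕ}

theorem map {H : SimpleGraph W} (f : G ↪g H) (h : VArrows G a) : VArrows H a := by
  intro c
  obtain ⟨i, S, hSi, hS⟩ := h (c ∘ f)
  refine ⟨i, S.map f.toEmbedding, by simpa using hSi, ?_⟩
  exact (hS.map (f := f.toEmbedding)).mono <|
    (map_le_iff_le_comap _ _ _).2 fun _ _ hadj => f.map_adj_iff.2 hadj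

theorem nonempty (h : VArrows G a) (ha : 0 ∉ a) : Nonempty V := by
  by_contra hV
  rw [not_nonempty_iff] at hV
  obtain ⟨i, S, -, hS⟩ := h isEmptyElim
  rw [Finset.eq_empty_of_isEmpty S, isNClique_empty] at hS
  exact ha (hS ▸ a.get_mem i)

theorem induce_compl_of_isIndepSet {s : Set V} [Fintype ↥sᶜ] (h : VArrows G (2 :: a))
    (hs : G.IsIndepSet s) : VArrows (G.induce sᶜ) a := by
  classical
  intro c
  obtain ⟨i, S, hSi, hS⟩ := h fun u => if hu : u ∈ s then 0 else (c ⟨u, hu⟩).succ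
  induction i using Fin.cases with
  | zero =>
    obtain ⟨x, y, hxy, rfl⟩ := Finset.card_eq_two.1 hS.card_eq
    have hmem : ∀ u ∈ ({x, y} : Finset V), u ∈ s := fun u hu => by
      by_contra hus
      have hu0 := hSi u hu
      rw [dif_neg hus] at hu0
      exact Fin.succ_ne_zero _ hu0
    exact (hs (hmem x (by simp)) (hmem y (by simp)) hxy (hS.isClique (by simp) (by simp) hxy)).elim
  | succ j =>
    have hcompl : ∀ u ∈ S, u ∈ sᶜ := fun u hu hus => by
      have hu0 := hSi u hu
      rw [dif_pos hus] at hu0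
      exact Fin.succ_ne_zero _ hu0.symm
    refine ⟨j, S.subtype (· ∈ sᶜ), fun u hu => ?_, ?_⟩
    · have hus : (u : V) ∉ s := u.2
      simpa [hus] using hSi u (Finset.mem_subtype.1 hu)
    · rw [isNClique_induce_iff, Finset.subtype_map_of_mem hcompl]
      exact hS

end VArrows

theorem Fv_le_card {V : Type} [Fintype V] {G : SimpleGraph V} {a : List ℕ} {q : ℕ}
    (hG : VArrows G a) (hq : G.CliqueFree q) : Fv a q ≤ Fintype.card V :=
  Nat.sInf_le ⟨G.map (Fintype.equivFin V).toEmbedding,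
    hG.map (Iso.map (Fintype.equivFin V) G).toEmbedding,
    hq.comap (Iso.map (Fintype.equivFin V) G).symm.isContained⟩

theorem exists_isIndepSet_cliqueFree_induce_compl_of_not_vArrows {V : Type} [Fintype V]
    {G : SimpleGraph V} {m : ℕ} (h : ¬VArrows G [2, m]) :
    ∃ s : Set V, G.IsIndepSet s ∧ (G.induce sᶜ).CliqueFree m := by
  classical
  simp only [VArrows, not_forall, not_exists, not_and] at h
  obtain ⟨c, hc⟩ := h
  refine ⟨{u | c u = 0}, fun x hx y hy hxy hadj => ?_, fun T hT => ?_⟩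
  · exact hc 0 {x, y} (by simp_all) (by simp [isNClique_iff, hadj, hxy])
  · refine hc 1 (T.map (.subtype _)) (fun u hu => ?_) ((isNClique_induce_iff _ _ _).1 hT)
    obtain ⟨w, -, rfl⟩ := Finset.mem_map.1 hu
    exact Fin.eq_one_of_ne_zero (c w) w.2

theorem SimpleGraph.IsIndepSet.exists_nonempty_superset {V : Type} [Nonempty V]
    {G : SimpleGraph V} {s : Set V} (hs : G.IsIndepSet s) :
    ∃ t, s ⊆ t ∧ t.Nonempty ∧ G.IsIndepSet t := by
  rcases s.eq_empty_or_nonempty with rfl | hne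
  · exact ⟨{Classical.arbitrary V}, Set.empty_subset _, Set.singleton_nonempty _,
      Set.pairwise_singleton _ _⟩
  · exact ⟨s, subset_rfl, hne, hs⟩

theorem extremal_arrows_general (p r₀ : ℕ) (hp : 2 ≤ p) (hr₀ : 2 < r₀)
    (hleast : ∀ r, 2 ≤ r → r < r₀ →
      Fv (List.replicate r₀ 2 ++ [p]) (r₀ + p - 1) + r <
        Fv (List.replicate r 2 ++ [p]) (r + p - 1) + r₀)
    {V : Type} [Fintype V] (G : SimpleGraph V)
    (hG₁ : VArrows G (List.replicate r₀ 2 ++ [p]))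
    (hext : Fintype.card V = Fv (List.replicate r₀ 2 ++ [p]) (r₀ + p - 1)) :
    VArrows G [2, r₀ + p - 2] := by
  classical
  by_contra hG
  obtain ⟨r, rfl⟩ : ∃ r, r₀ = r + 1 := ⟨r₀ - 1, by omega⟩
  have : Nonempty V := hG₁.nonempty <| by
    simp only [List.mem_append, List.mem_replicate, List.mem_singleton]; omega
  obtain ⟨s, hs, hfree⟩ := exists_isIndepSet_cliqueFree_induce_compl_of_not_vArrows hG
  obtain ⟨t, hst, htne, ht⟩ := hs.exists_nonempty_superset
  have hfree' : (G.induce tᶜ).CliqueFree (r + p - 1) := by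
    rw [show r + p - 1 = r + 1 + p - 2 by omega]
    exact hfree.comap (induceHomOfLE G (Set.compl_subset_compl.2 hst)).isContained
  have hsmaller : Fv (List.replicate r 2 ++ [p]) (r + p - 1) ≤ Fintype.card ↥tᶜ :=
    Fv_le_card (VArrows.induce_compl_of_isIndepSet hG₁ ht) hfree'
  have hcard : Fintype.card ↥tᶜ < Fintype.card V :=
    Fintype.card_subtype_lt (x := htne.some) (not_not.2 htne.some_mem)
  have hleast_r := hleast r (by omega) (by omega)
  omega

theorem extremal_arrows (p r₀ : ℕ) (hp : 2 ≤ p) (hr₀ : 2 < r₀)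
    (hmin : ∀ r, 2 ≤ r →
      Fv (List.replicate r₀ 2 ++ [p]) (r₀ + p - 1) + r ≤
        Fv (List.replicate r 2 ++ [p]) (r + p - 1) + r₀)
    (hleast : ∀ r, 2 ≤ r → r < r₀ →
      Fv (List.replicate r₀ 2 ++ [p]) (r₀ + p - 1) + r <
        Fv (List.replicate r 2 ++ [p]) (r + p - 1) + r₀)
    {V : Type} [Fintype V] (G : SimpleGraph V)
    (hG₁ : VArrows G (List.replicate r₀ 2 ++ [p]))
    (hG₂ : G.CliqueFree (r₀ + p - 1))
    (hext : Fintype.card V = Fv (List.replicate r₀ 2 ++ [p]) (r₀ + p - 1)) :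
    VArrows G [2, r₀ + p - 2] :=
  extremal_arrows_general p r₀ hp hr₀ hleast G hG₁ hext
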